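/- Under the bijection between short forests with n leaves and {a,b,c}-words of length n-1, a forest F with t(F) trees and b(F) branches corresponds to a word with #a = n - b(F), #c = t(F) - 1 and #b = b(F) - t(F) occurrences of the letters 'a', 'c' and 'b' respectively. -/

import Mathlib

/-- A short forest: a nonempty list of trees; each tree is a nonempty list of
branches, each branch carrying a positive number of leaves. -/
def IsShortForest (F : List (List ℕ)) : Prop :=
  F ≠ [] ∧ ∀ t ∈ F, t ≠ [] ∧ ∀ b ∈ t, 1 ≤ b

/-- Total number of leaves of a forest. -/
def forestLeaves (F : List (List ℕ)) : ℕ := (F.map List.sum).sum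

/-- Total number of branches of a forest. -/
def forestBranches (F : List (List ℕ)) : ℕ := (F.map List.length).sum

/-- Number of trees of a forest. -/
def forestTrees (F : List (List ℕ)) : ℕ := F.length

/-- The three-letter alphabet: `a` = {0}, `b` = [0,1], `c` = {1}. -/
inductive ABC | a | b | c
deriving DecidableEq

/-- The word of a single tree. -/
def treeWord (t : List ℕ) : List ABC :=
  List.intercalate [ABC.b] (t.map fun m => List.replicate (m - 1) ABC.a)

/-- The word of a forest. -/
def forestWord (F : List (List ℕ)) : List ABC :=
  List.intercalate [ABC.c] (F.map treeWord)

lemma count_intercalate (x y : ABC) :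
    ∀ L : List (List ABC), L ≠ [] →
      (List.intercalate [x] L).count y =
        (L.map (List.count y)).sum + (if y = x then L.length - 1 else 0)
  | [], h => absurd rfl h
  | [t], _ => by simp [List.intercalate]
  | t :: u :: L, _ => by
    have ih := count_intercalate x y (u :: L) (by simp)
    have : List.intercalate [x] (t :: u :: L) = t ++ [x] ++ List.intercalate [x] (u :: L) := by
      simp [List.intercalate]
    rw [this]
    simp only [List.count_append, ih, List.map_cons, List.sum_cons, List.length_cons]
    by_cases hyx : y = x
    · simp [hyx, List.count_singleton']; omega
    · simp [hyx, List.count_singleton']; exact Ne.symm hyx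

lemma sum_map_sub {α : Type*} (f g : α → ℕ) (L : List α) (h : ∀ x ∈ L, g x ≤ f x) :
    (L.map (fun x => f x - g x)).sum = (L.map f).sum - (L.map g).sum := by
  induction L with
  | nil => simp
  | cons x L ih =>
    have hle : (L.map g).sum ≤ (L.map f).sum :=
      List.sum_le_sum (fun i hi => h i (List.mem_cons_of_mem _ hi))
    have hx := h x List.mem_cons_self
    simp only [List.map_cons, List.sum_cons, ih (fun i hi => h i (List.mem_cons_of_mem _ hi))]
    omega

lemma len_le_sum (t : List ℕ) (hb : ∀ b ∈ t, 1 ≤ b) : t.length ≤ t.sum := by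
  induction t with
  | nil => simp
  | cons x t ih =>
    have := hb x List.mem_cons_self
    have := ih (fun i hi => hb i (List.mem_cons_of_mem _ hi))
    simp only [List.length_cons, List.sum_cons]
    omega

lemma sum_pred (t : List ℕ) (hb : ∀ b ∈ t, 1 ≤ b) :
    (t.map (fun m => m - 1)).sum = t.sum - t.length := by
  induction t with
  | nil => simp
  | cons x t ih =>
    have := hb x List.mem_cons_self
    have := len_le_sum t (fun i hi => hb i (List.mem_cons_of_mem _ hi))
    have := ih (fun i hi => hb i (List.mem_cons_of_mem _ hi))
    simp only [List.map_cons, List.sum_cons, List.length_cons, *]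
    omega

lemma treeWord_count (t : List ℕ) (ht : t ≠ []) (hb : ∀ b ∈ t, 1 ≤ b) :
    (treeWord t).count ABC.a = t.sum - t.length ∧
    (treeWord t).count ABC.b = t.length - 1 ∧
    (treeWord t).count ABC.c = 0 := by
  have hmap : ∀ y : ABC, (treeWord t).count y =
      ((t.map fun m => List.replicate (m - 1) ABC.a).map (List.count y)).sum +
        (if y = ABC.b then t.length - 1 else 0) := by
    intro y
    rw [treeWord, count_intercalate ABC.b y _ (by simpa using ht)]
    simp
  refine ⟨?_, ?_, ?_⟩
  · rw [hmap ABC.a]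
    simp only [List.map_map, Function.comp_def, List.count_replicate_self,
      if_neg (show ABC.a ≠ ABC.b by decide), add_zero]
    exact sum_pred t hb
  · rw [hmap ABC.b]
    simp [List.count_replicate, Function.comp_def]
  · rw [hmap ABC.c]
    simp [List.count_replicate, Function.comp_def]

/-- A short forest with `n` leaves yields a word with exactly `n - b(F)` letters
`a`, exactly `b(F) - t(F)` letters `b`, and exactly `t(F) - 1` letters `c`. -/
theorem forestWord_letter_counts (n : ℕ) (F : List (List ℕ))
    (hF : IsShortForest F) (hn : forestLeaves F = n) :
    (forestWord F).count ABC.a = n - forestBranches F ∧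
    (forestWord F).count ABC.b = forestBranches F - forestTrees F ∧
    (forestWord F).count ABC.c = forestTrees F - 1 := by
  obtain ⟨hFne, htrees⟩ := hF
  have hmap : ∀ y : ABC, (forestWord F).count y =
      ((F.map treeWord).map (List.count y)).sum + (if y = ABC.c then F.length - 1 else 0) := by
    intro y
    rw [forestWord, count_intercalate ABC.c y _ (by simpa using hFne)]
    simp
  have hlen_le : ∀ t ∈ F, t.length ≤ t.sum := by
    intro t ht
    calc t.length = (t.map fun _ => 1).sum := by simp
    _ ≤ t.sum := by
      rw [show t.sum = (t.map id).sum by simp]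
      exact List.sum_le_sum fun i hi => (htrees t ht).2 i hi
  have hlen_pos : ∀ t ∈ F, 1 ≤ t.length :=
    fun t ht => List.length_pos_iff.mpr (htrees t ht).1
  refine ⟨?_, ?_, ?_⟩
  · rw [hmap ABC.a, if_neg (by decide), add_zero, List.map_map]
    have : ∀ t ∈ F, (List.count ABC.a ∘ treeWord) t = t.sum - t.length := by
      intro t ht
      exact (treeWord_count t (htrees t ht).1 (htrees t ht).2).1
    rw [List.map_congr_left this, sum_map_sub List.sum List.length F hlen_le]
    rw [← hn]; rfl
  · rw [hmap ABC.b, if_neg (by decide), add_zero, List.map_map]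
    have : ∀ t ∈ F, (List.count ABC.b ∘ treeWord) t = t.length - 1 := by
      intro t ht
      exact (treeWord_count t (htrees t ht).1 (htrees t ht).2).2.1
    rw [List.map_congr_left this, sum_map_sub List.length (fun _ => 1) F hlen_pos]
    simp [forestBranches, forestTrees]
  · rw [hmap ABC.c, if_pos rfl, List.map_map]
    have : ∀ t ∈ F, (List.count ABC.c ∘ treeWord) t = 0 := by
      intro t ht
      exact (treeWord_count t (htrees t ht).1 (htrees t ht).2).2.2
    rw [List.map_congr_left this]
    simp [forestTrees]
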